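/- Suppose x(t+1) = Σ_{i=0}^{d} F_i(t) x^{[i]}(t) where the random matrices F(t) = [F_0(t),…,F_d(t)] are mutually independent across t, identically distributed, and independent of the random initial state x₀. Then the moments satisfy the deterministic recursion E[x^{[j]}(t+1)] = Σ_{k=0}^{jd} E_{j,k} E[x^{[k]}(t)], where E_{j,k} = E[ Σ_{(i_1,…,i_j) ∈ H_{j,k}} F_{i_1}(t) ⊗ ⋯ ⊗ F_{i_j}(t) ] (independent of t). -/

import Mathlib

open MeasureTheory ProbabilityTheory

/-- `k`-th Kronecker power of a vector `x ∈ ℝ^n`, indexed by multi-indices. -/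
def vecPow {n : ℕ} (x : Fin n → ℝ) (k : ℕ) : (Fin k → Fin n) → ℝ :=
  fun b => ∏ l, x (b l)

def sigmaIdx {j k : ℕ} (idx : Fin j → ℕ) (h : (∑ l, idx l) = k) (l : Fin j)
    (m2 : Fin (idx l)) : Fin k :=
  ⟨(∑ l' ∈ Finset.univ.filter (fun l' => l' < l), idx l') + (m2 : ℕ), by
    have h1 : (m2 : ℕ) < idx l := m2.isLt
    have h2 : idx l + ∑ l' ∈ Finset.univ.filter (fun l' => l' < l), idx l' ≤ ∑ l', idx l' := by
      rw [← Finset.sum_insert (by simp)]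
      exact Finset.sum_le_sum_of_subset (Finset.subset_univ _)
    omega⟩

/-- The type of a tuple `(F_0, …, F_d)` of coefficient matrices, `F_i ∈ ℝ^{n × n^i}`,
given entrywise. -/
abbrev CoefTuple (n d : ℕ) : Type :=
  (i : Fin (d+1)) → Fin n → (Fin (i : ℕ) → Fin n) → ℝ

/-- Entry `(a, b)` of the matrix `A_{j,k} = Σ_{(i_1,…,i_j) ∈ H_{j,k}} F_{i_1} ⊗ ⋯ ⊗ F_{i_j}`. -/
def AmatE {n d : ℕ} (F : CoefTuple n d) (j k : ℕ)
    (a : Fin j → Fin n) (b : Fin k → Fin n) : ℝ :=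
  ∑ idx : Fin j → Fin (d+1),
    if h : (∑ l, ((idx l : ℕ))) = k then
      ∏ l, F (idx l) (a l) (fun m2 => b (sigmaIdx (fun l' => ((idx l' : ℕ))) h l m2))
    else 0

/-- The family consisting of the initial state `x₀` and the coefficient tuples `F(t)`,
indexed by `Option ℕ` (`none ↦ x₀`, `some t ↦ F(t)`). -/
def fam {Ω : Type*} {n d : ℕ} (x0 : Ω → Fin n → ℝ) (F : ℕ → Ω → CoefTuple n d) :
    (o : Option ℕ) → Ω → (Option.elim o (Fin n → ℝ) (fun _ => CoefTuple n d)) :=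
  fun o => match o with
  | none => x0
  | some t => F t

/-- The entrywise product measurable-space structure on each member of the family. -/
def famInst (n d : ℕ) :
    (o : Option ℕ) → MeasurableSpace (Option.elim o (Fin n → ℝ) (fun _ => CoefTuple n d))
  | none => (inferInstance : MeasurableSpace (Fin n → ℝ))
  | some _ => (inferInstance : MeasurableSpace (CoefTuple n d))

/-!
Multiplying out `∏_l (Σ_i F_i x^{[i]})_{a_l}` gives one term for every choice of degrees
`(i_1, …, i_j)`; a multi-index of length `k = i_1 + ⋯ + i_j` splits into consecutive blocks of
lengths `i_l` (this is `sigmaIdx`, i.e. `finSigmaFinEquiv`), which regroups the terms as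
`x^{[j]}(t+1) = Σ_k A_{j,k}(t) x^{[k]}(t)`. By induction `x(t)` is measurable with respect to the
σ-algebra of `x₀, F(0), …, F(t-1)`, hence independent of `F(t)`, so the expectation of each
product `A_{j,k}(t) x^{[k]}(t)` factors; `E[A_{j,k}(t)]` does not depend on `t` because the
`F(t)` are identically distributed.
-/

section Kronecker

variable {n j k : ℕ}

lemma sum_filter_lt_eq_sum_castLE {M : Type*} [AddCommMonoid M] (f : Fin j → M) (l : Fin j) :
    ∑ l' ∈ Finset.univ.filter (· < l), f l' = ∑ i : Fin l, f (Fin.castLE l.2.le i) := by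
  have hmap : Finset.univ.filter (· < l) = Finset.univ.map (Fin.castLEEmb l.2.le) := by
    ext i
    simp only [Finset.mem_filter, Finset.mem_univ, true_and, Finset.mem_map, Fin.castLEEmb_apply]
    exact ⟨fun h => ⟨⟨i, h⟩, rfl⟩, by rintro ⟨i', rfl⟩; exact i'.2⟩
  rw [hmap, Finset.sum_map]
  rfl

lemma sigmaIdx_eq_finSigmaFinEquiv (idx : Fin j → ℕ) (h : ∑ l, idx l = k) (l : Fin j)
    (m : Fin (idx l)) : sigmaIdx idx h l m = Fin.cast h (finSigmaFinEquiv ⟨l, m⟩) := by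
  ext
  simp only [sigmaIdx, Fin.val_cast, finSigmaFinEquiv_apply, sum_filter_lt_eq_sum_castLE]

def blockEquiv (idx : Fin j → ℕ) (h : ∑ l, idx l = k) :
    (Fin k → Fin n) ≃ ((l : Fin j) → Fin (idx l) → Fin n) :=
  ((finSigmaFinEquiv.trans (finCongr h)).symm.arrowCongr (Equiv.refl _)).trans
    (Equiv.piCurry fun _ _ => Fin n)

lemma blockEquiv_apply (idx : Fin j → ℕ) (h : ∑ l, idx l = k) (b : Fin k → Fin n) (l : Fin j)
    (m : Fin (idx l)) : blockEquiv idx h b l m = b (sigmaIdx idx h l m) := by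
  simp [blockEquiv, Equiv.piCurry, Sigma.curry, Equiv.arrowCongr, sigmaIdx_eq_finSigmaFinEquiv]

lemma vecPow_eq_prod_blockEquiv (idx : Fin j → ℕ) (h : ∑ l, idx l = k) (y : Fin n → ℝ)
    (b : Fin k → Fin n) : vecPow y k b = ∏ l, vecPow y (idx l) (blockEquiv idx h b l) := by
  simp only [vecPow, blockEquiv_apply, sigmaIdx_eq_finSigmaFinEquiv]
  rw [← Fintype.prod_sigma' (fun l m => y (b (Fin.cast h (finSigmaFinEquiv ⟨l, m⟩))))]
  exact ((finSigmaFinEquiv.trans (finCongr h)).prod_comp fun p => y (b p)).symm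

lemma sum_prod_blocks_mul_vecPow (idx : Fin j → ℕ) (h : ∑ l, idx l = k)
    (g : (l : Fin j) → (Fin (idx l) → Fin n) → ℝ) (y : Fin n → ℝ) :
    ∑ b : Fin k → Fin n, (∏ l, g l (fun m => b (sigmaIdx idx h l m))) * vecPow y k b =
      ∏ l, ∑ β, g l β * vecPow y (idx l) β := by
  rw [Fintype.prod_sum]
  refine Fintype.sum_equiv (blockEquiv idx h) _ _ fun b => ?_
  rw [vecPow_eq_prod_blockEquiv idx h, ← Finset.prod_mul_distrib]
  simp only [← blockEquiv_apply idx h]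

end Kronecker

/-- The right-hand side `Σ_{i=0}^{d} F_i y^{[i]}` of the state equation. -/
def polyStep {n d : ℕ} (c : CoefTuple n d) (y : Fin n → ℝ) : Fin n → ℝ :=
  fun a => ∑ i : Fin (d+1), ∑ b : Fin (i : ℕ) → Fin n, c i a b * vecPow y (i : ℕ) b

section Expansion

variable {n d j : ℕ}

lemma sum_range_AmatE_mul_vecPow (c : CoefTuple n d) (y : Fin n → ℝ) (a : Fin j → Fin n) :
    ∑ k ∈ Finset.range (j * d + 1), ∑ b : Fin k → Fin n, AmatE c j k a b * vecPow y k b =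
      ∑ idx : Fin j → Fin (d+1), ∏ l, ∑ β, c (idx l) (a l) β * vecPow y (idx l) β := by
  simp only [AmatE, Finset.sum_mul]
  rw [Finset.sum_congr rfl fun k _ => Finset.sum_comm, Finset.sum_comm]
  refine Finset.sum_congr rfl fun idx _ => ?_
  have hdeg : ∑ l, (idx l : ℕ) ∈ Finset.range (j * d + 1) := by
    rw [Finset.mem_range, Nat.lt_succ_iff]
    simpa using Finset.sum_le_card_nsmul Finset.univ _ d fun l _ => Fin.is_le (idx l)
  simp only [dite_mul, zero_mul, Finset.sum_dite_irrel, Finset.sum_const_zero]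
  rw [Finset.sum_dite_eq, if_pos hdeg, sum_prod_blocks_mul_vecPow]

lemma vecPow_polyStep (c : CoefTuple n d) (y : Fin n → ℝ) (a : Fin j → Fin n) :
    vecPow (polyStep c y) j a =
      ∑ k ∈ Finset.range (j * d + 1), ∑ b : Fin k → Fin n, AmatE c j k a b * vecPow y k b := by
  rw [sum_range_AmatE_mul_vecPow]
  exact Fintype.prod_sum _

end Expansion

section Measurability

variable {n d : ℕ}

lemma measurable_vecPow (k : ℕ) (b : Fin k → Fin n) :
    Measurable fun y : Fin n → ℝ => vecPow y k b := by
  unfold vecPow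
  fun_prop

lemma measurable_AmatE (j k : ℕ) (a : Fin j → Fin n) (b : Fin k → Fin n) :
    Measurable fun c : CoefTuple n d => AmatE c j k a b := by
  unfold AmatE
  refine Finset.measurable_sum _ fun idx _ => ?_
  split_ifs
  · fun_prop
  · exact measurable_const

lemma measurable_polyStep :
    Measurable fun p : CoefTuple n d × (Fin n → ℝ) => polyStep p.1 p.2 := by
  unfold polyStep vecPow
  fun_prop

end Measurability

section PastMeasurableSpace

variable {Ω : Type*} {n d : ℕ}

/-- The σ-algebra generated by `x₀, F(0), …, F(t-1)`. -/
abbrev pastMeasurableSpace (x0 : Ω → Fin n → ℝ) (F : ℕ → Ω → CoefTuple n d) (t : ℕ) :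
    MeasurableSpace Ω :=
  ⨆ o ∈ {o : Option ℕ | ∀ s ∈ o, s < t}, (famInst n d o).comap (fam x0 F o)

lemma pastMeasurableSpace_mono (x0 : Ω → Fin n → ℝ) (F : ℕ → Ω → CoefTuple n d) :
    Monotone (pastMeasurableSpace x0 F) := fun _ _ hst =>
  biSup_mono fun _ ho s hs => (ho s hs).trans_le hst

lemma comap_fam_le_pastMeasurableSpace (x0 : Ω → Fin n → ℝ) (F : ℕ → Ω → CoefTuple n d)
    (o : Option ℕ) {t : ℕ} (ho : ∀ s ∈ o, s < t) :
    (famInst n d o).comap (fam x0 F o) ≤ pastMeasurableSpace x0 F t :=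
  le_iSup₂_of_le (f := fun o _ => (famInst n d o).comap (fam x0 F o)) o ho le_rfl

lemma measurable_state_pastMeasurableSpace {x : ℕ → Ω → Fin n → ℝ} {F : ℕ → Ω → CoefTuple n d}
    (hdyn : ∀ t ω, x (t+1) ω = polyStep (F t ω) (x t ω)) (t : ℕ) :
    Measurable[pastMeasurableSpace (x 0) F t] (x t) := by
  induction t with
  | zero =>
    exact measurable_iff_comap_le.2 (comap_fam_le_pastMeasurableSpace (x 0) F none (by simp))
  | succ t ih =>
    have hF : Measurable[pastMeasurableSpace (x 0) F (t+1)] (F t) :=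
      measurable_iff_comap_le.2 (comap_fam_le_pastMeasurableSpace (x 0) F (some t) (by simp))
    have hx := ih.mono (pastMeasurableSpace_mono (x 0) F t.le_succ) le_rfl
    rw [funext (hdyn t)]
    exact measurable_polyStep.comp (hF.prodMk hx)

end PastMeasurableSpace

section Independence

variable {Ω : Type*} [MeasurableSpace Ω] {μ : Measure Ω} {n d j : ℕ}

lemma indepFun_coef_state {x : ℕ → Ω → Fin n → ℝ} {F : ℕ → Ω → CoefTuple n d}
    (hx0 : Measurable (x 0)) (hF : ∀ t, Measurable (F t))
    (hdyn : ∀ t ω, x (t+1) ω = polyStep (F t ω) (x t ω))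
    (hindep : iIndepFun (m := famInst n d) (fam (x 0) F) μ) (t : ℕ) :
    IndepFun (F t) (x t) μ := by
  have hle : ∀ o, (famInst n d o).comap (fam (x 0) F o) ≤ ‹MeasurableSpace Ω›
    | none => hx0.comap_le
    | some s => (hF s).comap_le
  have hdisj : Disjoint {some t} {o : Option ℕ | ∀ s ∈ o, s < t} := by simp
  have hpast := indep_iSup_of_disjoint hle ((iIndepFun_iff_iIndep _ _ _).1 hindep) hdisj
  rw [IndepFun_iff_Indep]
  refine indep_of_indep_of_le_right (indep_of_indep_of_le_left hpast ?_)
    (measurable_state_pastMeasurableSpace hdyn t).comap_le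
  exact le_iSup₂_of_le (f := fun o _ => (famInst n d o).comap (fam (x 0) F o)) (some t) rfl le_rfl

lemma integral_vecPow_polyStep {c : Ω → CoefTuple n d} {y : Ω → Fin n → ℝ}
    (hc : Measurable c) (hy : Measurable y) (hcy : IndepFun c y μ) (a : Fin j → Fin n)
    (hint : ∀ k b, Integrable (fun ω => AmatE (c ω) j k a b * vecPow (y ω) k b) μ) :
    ∫ ω, vecPow (polyStep (c ω) (y ω)) j a ∂μ =
      ∑ k ∈ Finset.range (j * d + 1), ∑ b : Fin k → Fin n,
        (∫ ω, AmatE (c ω) j k a b ∂μ) * ∫ ω, vecPow (y ω) k b ∂μ := by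
  simp_rw [vecPow_polyStep]
  rw [integral_finsetSum _ fun k _ => integrable_finsetSum _ fun b _ => hint k b]
  refine Finset.sum_congr rfl fun k _ => ?_
  rw [integral_finsetSum _ fun b _ => hint k b]
  refine Finset.sum_congr rfl fun b _ => ?_
  exact (hcy.comp (measurable_AmatE j k a b) (measurable_vecPow k b)
    ).integral_fun_mul_eq_mul_integral ((measurable_AmatE j k a b).comp hc).aestronglyMeasurable
    ((measurable_vecPow k b).comp hy).aestronglyMeasurable

end Independence

theorem moment_recursion_general {Ω : Type*} [MeasurableSpace Ω]
    {μ : Measure Ω} {n d : ℕ}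
    (x : ℕ → Ω → Fin n → ℝ) (F : ℕ → Ω → CoefTuple n d)
    (hxmeas : ∀ t, Measurable (x t)) (hFmeas : ∀ t, Measurable (F t))
    (hdyn : ∀ t ω a, x (t+1) ω a =
      ∑ i : Fin (d+1), ∑ b : Fin (i : ℕ) → Fin n, F t ω i a b * vecPow (x t ω) (i : ℕ) b)
    (hindep : iIndepFun (m := famInst n d) (fam (x 0) F) μ)
    (hid : ∀ t, μ.map (F t) = μ.map (F 0))
    (hprodint : ∀ t j k a b b', Integrable
      (fun ω => AmatE (F t ω) j k a b * vecPow (x t ω) k b') μ) :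
    (∀ t j k a b, (∫ ω, AmatE (F t ω) j k a b ∂μ) = ∫ ω, AmatE (F 0 ω) j k a b ∂μ) ∧
    (∀ t j (a : Fin j → Fin n),
      (∫ ω, vecPow (x (t+1) ω) j a ∂μ) =
        ∑ k ∈ Finset.range (j * d + 1), ∑ b : Fin k → Fin n,
          (∫ ω, AmatE (F 0 ω) j k a b ∂μ) * ∫ ω, vecPow (x t ω) k b ∂μ) := by
  have hstep : ∀ t ω, x (t+1) ω = polyStep (F t ω) (x t ω) := fun t ω => funext (hdyn t ω)
  have hmean : ∀ t j k a b,
      (∫ ω, AmatE (F t ω) j k a b ∂μ) = ∫ ω, AmatE (F 0 ω) j k a b ∂μ := fun t j k a b =>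
    (IdentDistrib.comp ⟨(hFmeas t).aemeasurable, (hFmeas 0).aemeasurable, hid t⟩
      (measurable_AmatE j k a b)).integral_eq
  refine ⟨hmean, fun t j a => ?_⟩
  simp_rw [hstep, integral_vecPow_polyStep (hFmeas t) (hxmeas t)
    (indepFun_coef_state (hxmeas 0) hFmeas hstep hindep t) a fun k b => hprodint t j k a b b, hmean]

/-- Moment propagation: if `x(t+1) = Σ_{i=0}^{d} F_i(t) x^{[i]}(t)`, where the tuples
`F(t) = (F_0(t),…,F_d(t))` are mutually independent across `t`, independent of `x₀ = x(0)`,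
and identically distributed, then the moments of the state satisfy the deterministic
linear recursion `E[x^{[j]}(t+1)] = Σ_{k=0}^{jd} E_{j,k} E[x^{[k]}(t)]`, where
`E_{j,k} = E[A_{j,k}(t)]` does not depend on `t`. -/
theorem moment_recursion {Ω : Type*} [MeasurableSpace Ω]
    {μ : Measure Ω} [IsProbabilityMeasure μ] {n d : ℕ}
    (x : ℕ → Ω → Fin n → ℝ) (F : ℕ → Ω → CoefTuple n d)
    (hxmeas : ∀ t, Measurable (x t)) (hFmeas : ∀ t, Measurable (F t))
    (hdyn : ∀ t ω a, x (t+1) ω a =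
      ∑ i : Fin (d+1), ∑ b : Fin (i : ℕ) → Fin n, F t ω i a b * vecPow (x t ω) (i : ℕ) b)
    (hindep : iIndepFun (m := famInst n d) (fam (x 0) F) μ)
    (hid : ∀ t, μ.map (F t) = μ.map (F 0))
    (hxint : ∀ t k b, Integrable (fun ω => vecPow (x t ω) k b) μ)
    (hAint : ∀ t j k a b, Integrable (fun ω => AmatE (F t ω) j k a b) μ)
    (hprodint : ∀ t j k a b b', Integrable
      (fun ω => AmatE (F t ω) j k a b * vecPow (x t ω) k b') μ) :
    (∀ t j k a b, (∫ ω, AmatE (F t ω) j k a b ∂μ) = ∫ ω, AmatE (F 0 ω) j k a b ∂μ) ∧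
    (∀ t j (a : Fin j → Fin n),
      (∫ ω, vecPow (x (t+1) ω) j a ∂μ) =
        ∑ k ∈ Finset.range (j * d + 1), ∑ b : Fin k → Fin n,
          (∫ ω, AmatE (F 0 ω) j k a b ∂μ) * ∫ ω, vecPow (x t ω) k b ∂μ) :=
  moment_recursion_general x F hxmeas hFmeas hdyn hindep hid hprodint
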